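/- Let R be a commutative ring, G a group, Λ an RG-module admitting an R-split RG-linear monomorphism ι : R → Λ, and M a complex of RG-modules such that the complex of diagonal RG-modules M ⊗_R Λ is contractible. Then I ⊗_{RG} M is acyclic for every injective RG-module I. -/

import Mathlib

universe u v

open Function

section NCTensor

variable (S : Type u) [Ring S]

/-- The balancing relations for the tensor product `I ⊗_S M` of a right `S`-module `I`
with a left `S`-module `M`, inside `I ⊗_ℤ M`. -/
def ncRel (I : Type u) [AddCommGroup I] [Module Sᵐᵒᵖ I]
    (M : Type u) [AddCommGroup M] [Module S M] : Submodule ℤ (TensorProduct ℤ I M) :=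
  Submodule.span ℤ {z | ∃ (x : I) (s : S) (m : M),
    z = (MulOpposite.op s • x) ⊗ₜ[ℤ] m - x ⊗ₜ[ℤ] (s • m)}

/-- The tensor product `I ⊗_S M` of a right `S`-module `I` with a left `S`-module `M`
(as an abelian group). -/
def NCT (I : Type u) [AddCommGroup I] [Module Sᵐᵒᵖ I]
    (M : Type u) [AddCommGroup M] [Module S M] : Type u :=
  TensorProduct ℤ I M ⧸ ncRel S I M

noncomputable instance (I : Type u) [AddCommGroup I] [Module Sᵐᵒᵖ I]
    (M : Type u) [AddCommGroup M] [Module S M] : AddCommGroup (NCT S I M) :=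
  inferInstanceAs (AddCommGroup (TensorProduct ℤ I M ⧸ ncRel S I M))

/-- The map `I ⊗_S M → I ⊗_S N` induced by an `S`-linear map `f : M → N`. -/
noncomputable def nctMap (I : Type u) [AddCommGroup I] [Module Sᵐᵒᵖ I]
    {M N : Type u} [AddCommGroup M] [Module S M] [AddCommGroup N] [Module S N]
    (f : M →ₗ[S] N) : NCT S I M →ₗ[ℤ] NCT S I N :=
  Submodule.mapQ _ _ (LinearMap.lTensor I f.toAddMonoidHom.toIntLinearMap) (by
    apply Submodule.span_le.2
    rintro z ⟨x, s, m, rfl⟩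
    have hmem : (LinearMap.lTensor I f.toAddMonoidHom.toIntLinearMap)
        ((MulOpposite.op s • x) ⊗ₜ[ℤ] m - x ⊗ₜ[ℤ] (s • m)) ∈ ncRel S I N := by
      rw [map_sub, LinearMap.lTensor_tmul, LinearMap.lTensor_tmul]
      have h2 : f.toAddMonoidHom.toIntLinearMap (s • m) = s • f m := f.map_smul s m
      rw [h2]
      exact Submodule.subset_span ⟨x, s, f m, rfl⟩
    exact hmem)

end NCTensor

section Complexes

variable (S : Type u) [Ring S]

/-- A `ℤ`-indexed sequence of `S`-modules with maps `X (n+1) → X n`. -/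
structure ZComplex where
  X : ℤ → Type u
  [addX : ∀ n, AddCommGroup (X n)]
  [modX : ∀ n, Module S (X n)]
  d : ∀ n : ℤ, X (n + 1) →ₗ[S] X n

attribute [instance] ZComplex.addX ZComplex.modX

/-- `M` is a projectively coresolved Gorenstein flat (PGF) `S`-module: a syzygy of an acyclic
complex of projective `S`-modules which remains acyclic after tensoring with every injective
right `S`-module. -/
def IsPGF (M : Type u) [AddCommGroup M] [Module S M] : Prop :=
  ∃ P : ZComplex S,
    (∀ n, Module.Projective S (P.X n)) ∧
    (∀ n, Function.Exact (P.d (n + 1)) (P.d n)) ∧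
    (∀ (I : Type u) [AddCommGroup I] [Module Sᵐᵒᵖ I], Module.Injective Sᵐᵒᵖ I →
      ∀ n, Function.Exact (nctMap S I (P.d (n + 1))) (nctMap S I (P.d n))) ∧
    Nonempty ((LinearMap.range (P.d 0)) ≃ₗ[S] M)

/-- `M` is a Gorenstein projective `S`-module: a syzygy of an acyclic complex of projective
`S`-modules which stays acyclic under `Hom_S(-, Q)` for every projective `S`-module `Q`. -/
def IsGorensteinProjective (M : Type u) [AddCommGroup M] [Module S M] : Prop :=
  ∃ P : ZComplex S,
    (∀ n, Module.Projective S (P.X n)) ∧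
    (∀ n, Function.Exact (P.d (n + 1)) (P.d n)) ∧
    (∀ (Q : Type u) [AddCommGroup Q] [Module S Q], Module.Projective S Q →
      ∀ n, Function.Exact (fun φ : P.X n →ₗ[S] Q => φ.comp (P.d n))
        (fun ψ : P.X (n + 1) →ₗ[S] Q => ψ.comp (P.d (n + 1)))) ∧
    Nonempty ((LinearMap.range (P.d 0)) ≃ₗ[S] M)

/-- A (left) resolution of the `S`-module `M`. -/
structure NatRes (M : Type u) [AddCommGroup M] [Module S M] where
  F : ℕ → Type u
  [addF : ∀ n, AddCommGroup (F n)]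
  [modF : ∀ n, Module S (F n)]
  d : ∀ n : ℕ, F (n + 1) →ₗ[S] F n
  aug : F 0 →ₗ[S] M
  surj : Function.Surjective aug
  exact0 : Function.Exact (d 0) aug
  exact : ∀ n, Function.Exact (d (n + 1)) (d n)

attribute [instance] NatRes.addF NatRes.modF

/-- A class of `S`-modules. -/
def ModClass : Type (u + 1) :=
  ∀ (N : Type u) [AddCommGroup N] [Module S N], Prop

/-- `M` admits a resolution of length at most `n` by modules in the class `C`. -/
def HasResLen (C : ModClass S) (M : Type u) [AddCommGroup M] [Module S M] (n : ℕ) : Prop :=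
  ∃ ρ : NatRes S M, (∀ i, C (ρ.F i)) ∧ ∀ i, n < i → ∀ x : ρ.F i, x = 0

/-- The resolution dimension of `M` with respect to the class `C`, as an element of `ℕ∞`. -/
noncomputable def classDim (C : ModClass S) (M : Type u) [AddCommGroup M] [Module S M] : ℕ∞ :=
  sInf {e : ℕ∞ | ∃ n : ℕ, e = n ∧ HasResLen S C M n}

/-- The class of projective `S`-modules. -/
def projClass : ModClass S := fun N _ _ => Module.Projective S N

/-- The class of PGF `S`-modules. -/
def pgfClass : ModClass S := fun N _ _ => IsPGF S N

/-- The projective dimension of `M` as an element of `ℕ∞`. -/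
noncomputable def projDim (M : Type u) [AddCommGroup M] [Module S M] : ℕ∞ :=
  classDim S (projClass S) M

/-- The PGF dimension of `M` as an element of `ℕ∞`. -/
noncomputable def pgfDim (M : Type u) [AddCommGroup M] [Module S M] : ℕ∞ :=
  classDim S (pgfClass S) M

/-- A bundled injective `S`-module. -/
structure InjMod where
  carrier : Type u
  [addC : AddCommGroup carrier]
  [modC : Module S carrier]
  inj : Module.Injective S carrier

attribute [instance] InjMod.addC InjMod.modC

/-- `spli S`: the supremum of the projective dimensions of injective `S`-modules. -/
noncomputable def spli : ℕ∞ :=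
  sSup (Set.range fun I : InjMod S => projDim S I.carrier)

end Complexes

section Sfli

variable (R : Type u) [CommRing R]

/-- The class of flat `R`-modules. -/
def flatClass : ModClass R := fun N _ _ => Module.Flat R N

/-- The flat dimension of `M` as an element of `ℕ∞`. -/
noncomputable def flatDim (M : Type u) [AddCommGroup M] [Module R M] : ℕ∞ :=
  classDim R (flatClass R) M

/-- `sfli R`: the supremum of the flat dimensions of injective `R`-modules. -/
noncomputable def sfli : ℕ∞ :=
  sSup (Set.range fun I : InjMod R => flatDim R I.carrier)

end Sfli

section Trivial

variable (R : Type u) [CommRing R] (G : Type u) [Group G]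

/-- The augmentation `R`-algebra map `R[G] → R`. -/
noncomputable def augmentation : MonoidAlgebra R G →ₐ[R] R :=
  MonoidAlgebra.lift R R G 1

end Trivial

/-- The trivial `R[G]`-module `R`. -/
def Triv (R : Type u) (G : Type u) : Type u := R

section Trivial2

variable (R : Type u) [CommRing R] (G : Type u) [Group G]

instance : AddCommGroup (Triv R G) := inferInstanceAs (AddCommGroup R)

instance : Module R (Triv R G) := inferInstanceAs (Module R R)

noncomputable instance : Module (MonoidAlgebra R G) (Triv R G) :=
  Module.compHom R (augmentation R G).toRingHom

instance : IsScalarTower R (MonoidAlgebra R G) (Triv R G) :=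
  ⟨fun r x m => by
    show (augmentation R G) (r • x) • m = r • ((augmentation R G) x • m)
    rw [map_smul]
    exact mul_smul r ((augmentation R G) x) m⟩

/-- The PGF dimension of the group `G` over `R`: the PGF dimension of the trivial
`R[G]`-module `R`. -/
noncomputable def pgfGroupDim : ℕ∞ :=
  pgfDim (MonoidAlgebra R G) (Triv R G)

end Trivial2


/-- The `R`-linear action of `g : G` on an `R[G]`-module. -/
noncomputable def gAct (R : Type u) [CommRing R] (G : Type u) [Group G] (A : Type u)
    [AddCommGroup A] [Module R A] [Module (MonoidAlgebra R G) A]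
    [IsScalarTower R (MonoidAlgebra R G) A] (g : G) : A →ₗ[R] A where
  toFun a := (MonoidAlgebra.of R G g) • a
  map_add' a b := smul_add _ a b
  map_smul' r a := by
    simp only [RingHom.id_apply]
    calc (MonoidAlgebra.of R G g) • (r • a)
        = (MonoidAlgebra.of R G g) • ((algebraMap R (MonoidAlgebra R G) r) • a) := by
          rw [algebraMap_smul]
      _ = ((MonoidAlgebra.of R G g) * algebraMap R (MonoidAlgebra R G) r) • a := by
          rw [mul_smul]
      _ = ((algebraMap R (MonoidAlgebra R G) r) * (MonoidAlgebra.of R G g)) • a := by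
          rw [Algebra.commutes]
      _ = r • ((MonoidAlgebra.of R G g) • a) := by rw [mul_smul, algebraMap_smul]

section AuxGeneral

open MulOpposite

theorem nct_mk_rel {S : Type u} [Ring S] {I : Type u} [AddCommGroup I] [Module Sᵐᵒᵖ I]
    {M : Type u} [AddCommGroup M] [Module S M] (a : I) (s : S) (m : M) :
    (Submodule.Quotient.mk ((op s • a) ⊗ₜ[ℤ] m) : NCT S I M) =
      Submodule.Quotient.mk (a ⊗ₜ[ℤ] (s • m)) := by
  rw [Submodule.Quotient.eq]
  exact Submodule.subset_span ⟨a, s, m, rfl⟩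

theorem nct_mk_zero {S : Type u} [Ring S] {I : Type u} [AddCommGroup I] [Module Sᵐᵒᵖ I]
    {M : Type u} [AddCommGroup M] [Module S M] :
    (Submodule.Quotient.mk (0 : TensorProduct ℤ I M) : NCT S I M) = (0 : NCT S I M) :=
  Submodule.Quotient.mk_zero _

theorem nct_mk_add {S : Type u} [Ring S] {I : Type u} [AddCommGroup I] [Module Sᵐᵒᵖ I]
    {M : Type u} [AddCommGroup M] [Module S M] (x y : TensorProduct ℤ I M) :
    (Submodule.Quotient.mk (x + y) : NCT S I M) =
      @HAdd.hAdd (NCT S I M) (NCT S I M) (NCT S I M) _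
        (Submodule.Quotient.mk x) (Submodule.Quotient.mk y) :=
  Submodule.Quotient.mk_add _

theorem nctMap_mk {S : Type u} [Ring S] (I : Type u) [AddCommGroup I] [Module Sᵐᵒᵖ I]
    {M N : Type u} [AddCommGroup M] [Module S M] [AddCommGroup N] [Module S N]
    (f : M →ₗ[S] N) (a : I) (m : M) :
    nctMap S I f (Submodule.Quotient.mk (a ⊗ₜ[ℤ] m)) =
      Submodule.Quotient.mk (a ⊗ₜ[ℤ] f m) := by
  rw [nctMap]
  exact (Submodule.mapQ_apply _ _ _ _).trans rfl

variable (R : Type u) [CommRing R] (G : Type u) [Group G]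

local notation "𝕊" => MonoidAlgebra R G

theorem gAct_apply (A : Type u) [AddCommGroup A] [Module R A] [Module 𝕊 A]
    [IsScalarTower R 𝕊 A] (g : G) (a : A) :
    gAct R G A g a = MonoidAlgebra.of R G g • a := rfl

theorem gAct_one (A : Type u) [AddCommGroup A] [Module R A] [Module 𝕊 A]
    [IsScalarTower R 𝕊 A] : gAct R G A 1 = LinearMap.id := by
  ext a
  show MonoidAlgebra.of R G 1 • a = a
  rw [map_one, one_smul]

theorem gAct_mul (A : Type u) [AddCommGroup A] [Module R A] [Module 𝕊 A]
    [IsScalarTower R 𝕊 A] (g h : G) :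
    gAct R G A (g * h) = (gAct R G A g) ∘ₗ (gAct R G A h) := by
  ext a
  show MonoidAlgebra.of R G (g * h) • a = MonoidAlgebra.of R G g • (MonoidAlgebra.of R G h • a)
  rw [map_mul, mul_smul]

/-- The trivial module element `1`. -/
def trivOne : Triv R G := (1 : R)

theorem triv_smul (a : 𝕊) (x : Triv R G) : a • x = augmentation R G a • x := rfl

theorem triv_of_smul (g : G) (x : Triv R G) : MonoidAlgebra.of R G g • x = x := by
  rw [triv_smul, augmentation, MonoidAlgebra.lift_of, MonoidHom.one_apply, one_smul]

/-- Extend an `R`-linear `G`-equivariant map to an `R[G]`-linear map. -/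
noncomputable def extendG {A B : Type u} [AddCommGroup A] [Module R A] [Module 𝕊 A]
    [IsScalarTower R 𝕊 A] [AddCommGroup B] [Module R B] [Module 𝕊 B] [IsScalarTower R 𝕊 B]
    (f : A →ₗ[R] B)
    (hf : ∀ (g : G) (a : A), f (MonoidAlgebra.of R G g • a) = MonoidAlgebra.of R G g • f a) :
    A →ₗ[𝕊] B where
  toFun := f
  map_add' := f.map_add
  map_smul' a x := by
    simp only [RingHom.id_apply]
    induction a using MonoidAlgebra.induction_on with
    | of g => exact hf g x
    | add a b ha hb => rw [add_smul, add_smul, f.map_add, ha, hb]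
    | smul r a ha => rw [smul_assoc, f.map_smul, ha, smul_assoc]

@[simp] theorem extendG_apply {A B : Type u} [AddCommGroup A] [Module R A] [Module 𝕊 A]
    [IsScalarTower R 𝕊 A] [AddCommGroup B] [Module R B] [Module 𝕊 B] [IsScalarTower R 𝕊 B]
    (f : A →ₗ[R] B) (hf : ∀ (g : G) (a : A),
      f (MonoidAlgebra.of R G g • a) = MonoidAlgebra.of R G g • f a) (a : A) :
    extendG R G f hf a = f a := rfl

/-- Extend an equivariant additive map between right modules to an `R[G]ᵐᵒᵖ`-linear map. -/
noncomputable def extendGop {A B : Type u} [AddCommGroup A] [Module 𝕊ᵐᵒᵖ A]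
    [AddCommGroup B] [Module 𝕊ᵐᵒᵖ B] (f : A →+ B)
    (hg : ∀ (g : G) (a : A),
      f (op (MonoidAlgebra.of R G g) • a) = op (MonoidAlgebra.of R G g) • f a)
    (hr : ∀ (r : R) (a : A),
      f (op (algebraMap R 𝕊 r) • a) = op (algebraMap R 𝕊 r) • f a) :
    A →ₗ[𝕊ᵐᵒᵖ] B where
  toFun := f
  map_add' := f.map_add
  map_smul' m a := by
    simp only [RingHom.id_apply]
    have key : ∀ s : 𝕊, ∀ a : A, f (op s • a) = op s • f a := by
      intro s
      refine MonoidAlgebra.induction_on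
        (motive := fun s => ∀ a : A, f (op s • a) = op s • f a) s (fun g a => hg g a)
        (fun x y hx hy a => ?_) (fun r x hx a => ?_)
      · rw [op_add, add_smul, add_smul, f.map_add, hx, hy]
      · rw [Algebra.smul_def, op_mul, mul_smul, hx, hr, mul_smul]
    calc f (m • a) = f (op (unop m) • a) := by rw [op_unop]
    _ = op (unop m) • f a := key _ a
    _ = m • f a := by rw [op_unop]

@[simp] theorem extendGop_apply {A B : Type u} [AddCommGroup A] [Module 𝕊ᵐᵒᵖ A]
    [AddCommGroup B] [Module 𝕊ᵐᵒᵖ B] (f : A →+ B) (hg) (hr) (a : A) :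
    extendGop R G f hg hr a = f a := rfl

end AuxGeneral

section AuxDiag

open MulOpposite

variable (R : Type u) [CommRing R] (G : Type u) [Group G]

local notation "𝕊" => MonoidAlgebra R G

/-- The diagonal tensor product `A ⊗_R Λ` as a type synonym. -/
def DiagT (Lam A : Type u) [AddCommGroup Lam] [Module R Lam]
    [AddCommGroup A] [Module R A] : Type u :=
  TensorProduct R A Lam

variable (Lam : Type u) [AddCommGroup Lam] [Module R Lam] [Module (MonoidAlgebra R G) Lam]
  [IsScalarTower R (MonoidAlgebra R G) Lam]
variable (A : Type u) [AddCommGroup A] [Module R A] [Module (MonoidAlgebra R G) A]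
  [IsScalarTower R (MonoidAlgebra R G) A]

noncomputable instance : AddCommGroup (DiagT R Lam A) :=
  inferInstanceAs (AddCommGroup (TensorProduct R A Lam))

noncomputable instance : Module R (DiagT R Lam A) :=
  inferInstanceAs (Module R (TensorProduct R A Lam))

/-- The diagonal `G`-action on `A ⊗_R Λ`. -/
noncomputable def diagRho : G →* Module.End R (DiagT R Lam A) where
  toFun g := TensorProduct.map (gAct R G A g) (gAct R G Lam g)
  map_one' := by
    show TensorProduct.map (gAct R G A 1) (gAct R G Lam 1) = LinearMap.id
    rw [gAct_one, gAct_one, TensorProduct.map_id]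
  map_mul' g h := by
    show TensorProduct.map (gAct R G A (g * h)) (gAct R G Lam (g * h)) = _
    rw [gAct_mul, gAct_mul, TensorProduct.map_comp]
    rfl

/-- The diagonal `R[G]`-algebra map. -/
noncomputable def diagPsi : 𝕊 →ₐ[R] Module.End R (DiagT R Lam A) :=
  MonoidAlgebra.lift R _ G (diagRho R G Lam A)

noncomputable instance : Module 𝕊 (DiagT R Lam A) :=
  Module.compHom _ (diagPsi R G Lam A).toRingHom

theorem diagT_smul_def (a : 𝕊) (t : DiagT R Lam A) :
    a • t = diagPsi R G Lam A a t := rfl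

instance : IsScalarTower R 𝕊 (DiagT R Lam A) :=
  ⟨fun r a t => by
    show diagPsi R G Lam A (r • a) t = r • diagPsi R G Lam A a t
    rw [map_smul]
    rfl⟩

theorem diagT_of_smul (g : G) (t : DiagT R Lam A) :
    MonoidAlgebra.of R G g • t = TensorProduct.map (gAct R G A g) (gAct R G Lam g) t := by
  rw [diagT_smul_def, diagPsi, MonoidAlgebra.lift_of]
  rfl

theorem diagT_of_smul_tmul (g : G) (a : A) (l : Lam) :
    MonoidAlgebra.of R G g • (show DiagT R Lam A from a ⊗ₜ[R] l) =
      (show DiagT R Lam A from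
        (MonoidAlgebra.of R G g • a) ⊗ₜ[R] (MonoidAlgebra.of R G g • l)) := by
  rw [diagT_of_smul]
  exact TensorProduct.map_tmul _ _ _ _

theorem diagT_alg_smul (r : R) (t : DiagT R Lam A) :
    algebraMap R 𝕊 r • t = r • t := by
  rw [diagT_smul_def, AlgHom.commutes, Module.algebraMap_end_eq_smul_id]
  rfl

@[elab_as_elim]
theorem diagT_ind {P : DiagT R Lam A → Prop} (y : DiagT R Lam A) (h0 : P 0)
    (ht : ∀ (x : A) (l : Lam), P (show DiagT R Lam A from x ⊗ₜ[R] l))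
    (ha : ∀ y z, P y → P z → P (y + z)) : P y :=
  TensorProduct.induction_on y h0 ht ha

end AuxDiag

section AuxOp

open MulOpposite

/-- Type synonym for a right `R[G]`-module, carrying an `R`-module structure. -/
def OpM (R G I : Type u) : Type u := I

variable (R : Type u) [CommRing R] (G : Type u) [Group G]

local notation "𝕊" => MonoidAlgebra R G

variable (I : Type u) [AddCommGroup I] [Module (MonoidAlgebra R G)ᵐᵒᵖ I]

instance : AddCommGroup (OpM R G I) := inferInstanceAs (AddCommGroup I)

instance : Module 𝕊ᵐᵒᵖ (OpM R G I) := inferInstanceAs (Module 𝕊ᵐᵒᵖ I)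

/-- The canonical map `R → R[G]ᵐᵒᵖ`. -/
noncomputable def algOpHom : R →+* 𝕊ᵐᵒᵖ :=
  (algebraMap R 𝕊).toOpposite fun x y => (Algebra.commutes x (algebraMap R 𝕊 y))

noncomputable instance : Module R (OpM R G I) := Module.compHom I (algOpHom R G)

/-- Coercion into the type synonym. -/
def toOpM (i : I) : OpM R G I := i

theorem opM_smul_def (r : R) (i : OpM R G I) :
    r • i = op (algebraMap R 𝕊 r) • i := rfl

/-- The right action of `g` on a right module, as an `R`-linear map. -/
noncomputable def opAct (g : G) : OpM R G I →ₗ[R] OpM R G I where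
  toFun i := op (MonoidAlgebra.of R G g) • i
  map_add' a b := smul_add _ a b
  map_smul' r i := by
    simp only [RingHom.id_apply]
    rw [opM_smul_def, opM_smul_def, smul_smul, smul_smul, ← op_mul, ← op_mul,
      Algebra.commutes]

theorem opAct_apply (g : G) (i : OpM R G I) :
    opAct R G I g i = op (MonoidAlgebra.of R G g) • i := rfl

theorem opAct_one : opAct R G I 1 = LinearMap.id := by
  ext i
  show op (MonoidAlgebra.of R G 1) • i = i
  rw [map_one, op_one, one_smul]

theorem opAct_mul (g h : G) :
    opAct R G I (g * h) = (opAct R G I h) ∘ₗ (opAct R G I g) := by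
  ext i
  show op (MonoidAlgebra.of R G (g * h)) • i = _
  rw [map_mul, op_mul, mul_smul]
  rfl

end AuxOp

section AuxLamTen

open MulOpposite

variable (R : Type u) [CommRing R] (G : Type u) [Group G]

local notation "𝕊" => MonoidAlgebra R G

variable (Lam : Type u) [AddCommGroup Lam] [Module R Lam] [Module (MonoidAlgebra R G) Lam]
  [IsScalarTower R (MonoidAlgebra R G) Lam]
variable (I : Type u) [AddCommGroup I] [Module (MonoidAlgebra R G)ᵐᵒᵖ I]

/-- `Λ ⊗_R I` with the diagonal right `R[G]`-action, as a type synonym. -/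
def LamTen : Type u := TensorProduct R Lam (OpM R G I)

noncomputable instance : AddCommGroup (LamTen R G Lam I) :=
  inferInstanceAs (AddCommGroup (TensorProduct R Lam (OpM R G I)))

noncomputable instance : Module R (LamTen R G Lam I) :=
  inferInstanceAs (Module R (TensorProduct R Lam (OpM R G I)))

/-- The diagonal right `G`-action on `Λ ⊗_R I`. -/
noncomputable def lamRho : G →* (Module.End R (LamTen R G Lam I))ᵐᵒᵖ where
  toFun g := op (TensorProduct.map (gAct R G Lam g⁻¹) (opAct R G I g))
  map_one' := by
    show op (TensorProduct.map (gAct R G Lam (1 : G)⁻¹) (opAct R G I 1)) = 1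
    rw [inv_one, gAct_one, opAct_one, TensorProduct.map_id]
    rfl
  map_mul' g h := by
    show op (TensorProduct.map (gAct R G Lam (g * h)⁻¹) (opAct R G I (g * h))) =
      op (TensorProduct.map (gAct R G Lam g⁻¹) (opAct R G I g)) *
        op (TensorProduct.map (gAct R G Lam h⁻¹) (opAct R G I h))
    rw [← op_mul]
    congr 1
    rw [mul_inv_rev, gAct_mul, opAct_mul, Module.End.mul_eq_comp, ← TensorProduct.map_comp]

/-- The resulting algebra map `R[G] → End(Λ ⊗ I)ᵐᵒᵖ`. -/
noncomputable def lamPhi : 𝕊 →ₐ[R] (Module.End R (LamTen R G Lam I))ᵐᵒᵖ :=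
  MonoidAlgebra.lift R _ G (lamRho R G Lam I)

/-- The induced ring map `R[G]ᵐᵒᵖ → End(Λ ⊗ I)`. -/
noncomputable def lamOpHom : 𝕊ᵐᵒᵖ →+* Module.End R (LamTen R G Lam I) where
  toFun s := unop (lamPhi R G Lam I (unop s))
  map_one' := by simp
  map_mul' a b := by simp [unop_mul]
  map_zero' := by simp
  map_add' a b := by simp [unop_add]

noncomputable instance : Module 𝕊ᵐᵒᵖ (LamTen R G Lam I) :=
  Module.compHom _ (lamOpHom R G Lam I)

theorem lamTen_smul_def (s : 𝕊ᵐᵒᵖ) (t : LamTen R G Lam I) :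
    s • t = unop (lamPhi R G Lam I (unop s)) t := rfl

theorem lamTen_of_smul (g : G) (t : LamTen R G Lam I) :
    op (MonoidAlgebra.of R G g) • t =
      TensorProduct.map (gAct R G Lam g⁻¹) (opAct R G I g) t := by
  rw [lamTen_smul_def, unop_op, lamPhi, MonoidAlgebra.lift_of]
  rfl

theorem lamTen_of_smul_tmul (g : G) (l : Lam) (i : OpM R G I) :
    op (MonoidAlgebra.of R G g) • (show LamTen R G Lam I from l ⊗ₜ[R] i) =
      (show LamTen R G Lam I from
        (MonoidAlgebra.of R G g⁻¹ • l) ⊗ₜ[R] (op (MonoidAlgebra.of R G g) • i)) := by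
  rw [lamTen_of_smul]
  exact TensorProduct.map_tmul _ _ _ _

theorem lamTen_alg_smul (r : R) (t : LamTen R G Lam I) :
    op (algebraMap R 𝕊 r) • t = r • t := by
  rw [lamTen_smul_def, unop_op, AlgHom.commutes]
  show unop (op (algebraMap R (Module.End R (LamTen R G Lam I)) r)) t = r • t
  rw [unop_op, Module.algebraMap_end_eq_smul_id]
  rfl

end AuxLamTen

section AuxIota

open MulOpposite TensorProduct

variable (R : Type u) [CommRing R] (G : Type u) [Group G]

local notation "𝕊" => MonoidAlgebra R G

variable (Lam : Type u) [AddCommGroup Lam] [Module R Lam] [Module (MonoidAlgebra R G) Lam]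
  [IsScalarTower R (MonoidAlgebra R G) Lam]
variable (ι : Triv R G →ₗ[MonoidAlgebra R G] Lam)

omit [Module R Lam] [IsScalarTower R (MonoidAlgebra R G) Lam] in
theorem iota_one_fixed (g : G) :
    MonoidAlgebra.of R G g • ι (trivOne R G) = ι (trivOne R G) := by
  rw [← map_smul, triv_of_smul]

/-- The `R[G]`-linear map `A → A ⊗ Λ`, `x ↦ x ⊗ ι(1)`. -/
noncomputable def iotaX (A : Type u) [AddCommGroup A] [Module R A]
    [Module (MonoidAlgebra R G) A] [IsScalarTower R (MonoidAlgebra R G) A] :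
    A →ₗ[𝕊] DiagT R Lam A :=
  extendG R G
    (show A →ₗ[R] DiagT R Lam A from (TensorProduct.mk R A Lam).flip (ι (trivOne R G)))
    (by
      intro g a
      rw [diagT_of_smul]
      show ((MonoidAlgebra.of R G g • a) ⊗ₜ[R] ι (trivOne R G)) =
        TensorProduct.map (gAct R G A g) (gAct R G Lam g) (a ⊗ₜ[R] ι (trivOne R G))
      rw [TensorProduct.map_tmul, gAct_apply, gAct_apply, iota_one_fixed])

theorem iotaX_apply (A : Type u) [AddCommGroup A] [Module R A]
    [Module (MonoidAlgebra R G) A] [IsScalarTower R (MonoidAlgebra R G) A] (a : A) :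
    iotaX R G Lam ι A a = (show DiagT R Lam A from a ⊗ₜ[R] ι (trivOne R G)) := rfl

variable (I : Type u) [AddCommGroup I] [Module (MonoidAlgebra R G)ᵐᵒᵖ I]

/-- `i ↦ ι(1) ⊗ i` as an additive map. -/
noncomputable def iotaIHom : I →+ LamTen R G Lam I where
  toFun i := show LamTen R G Lam I from ι (trivOne R G) ⊗ₜ[R] toOpM R G I i
  map_zero' := TensorProduct.tmul_zero (OpM R G I) (ι (trivOne R G))
  map_add' a b :=
    TensorProduct.tmul_add (ι (trivOne R G)) (toOpM R G I a) (toOpM R G I b)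

/-- `i ↦ ι(1) ⊗ i` as an `R[G]ᵐᵒᵖ`-linear map. -/
noncomputable def iotaI : I →ₗ[𝕊ᵐᵒᵖ] LamTen R G Lam I :=
  extendGop R G (iotaIHom R G Lam ι I)
    (by
      intro g i
      rw [lamTen_of_smul]
      show (ι (trivOne R G) ⊗ₜ[R] toOpM R G I (op (MonoidAlgebra.of R G g) • i)) =
        TensorProduct.map (gAct R G Lam g⁻¹) (opAct R G I g)
          (ι (trivOne R G) ⊗ₜ[R] toOpM R G I i)
      rw [TensorProduct.map_tmul, gAct_apply, iota_one_fixed]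
      rfl)
    (by
      intro r i
      rw [lamTen_alg_smul]
      show (ι (trivOne R G) ⊗ₜ[R] toOpM R G I (op (algebraMap R 𝕊 r) • i)) =
        r • (show LamTen R G Lam I from ι (trivOne R G) ⊗ₜ[R] toOpM R G I i)
      rw [show (r • (show LamTen R G Lam I from ι (trivOne R G) ⊗ₜ[R] toOpM R G I i)) =
        ι (trivOne R G) ⊗ₜ[R] (r • toOpM R G I i) from (tmul_smul r _ _).symm]
      rw [opM_smul_def]
      rfl)

theorem iotaI_apply (i : I) :
    iotaI R G Lam ι I i =
      (show LamTen R G Lam I from ι (trivOne R G) ⊗ₜ[R] toOpM R G I i) := rfl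

variable (σ : Lam →ₗ[R] Triv R G)

/-- The bilinear retraction data. -/
noncomputable def retrB : Lam →ₗ[R] OpM R G I →ₗ[R] OpM R G I where
  toFun l := (show R from σ l) • (LinearMap.id : OpM R G I →ₗ[R] OpM R G I)
  map_add' a b := by
    show (show R from σ (a + b)) • _ = _
    rw [map_add]
    exact add_smul _ _ _
  map_smul' r l := by
    simp only [RingHom.id_apply]
    show (show R from σ (r • l)) • _ = _
    rw [map_smul]
    exact smul_assoc r (show R from σ l) _

/-- The retraction `Λ ⊗ I → I`. -/
noncomputable def retr : LamTen R G Lam I →ₗ[R] OpM R G I :=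
  show TensorProduct R Lam (OpM R G I) →ₗ[R] OpM R G I from
    TensorProduct.lift (retrB R G Lam I σ)

theorem iotaI_injective (hσ1 : σ (ι (trivOne R G)) = trivOne R G) :
    Function.Injective (iotaI R G Lam ι I) := by
  have h : ∀ i : I, retr R G Lam I σ (iotaI R G Lam ι I i) = i := by
    intro i
    rw [iotaI_apply]
    show TensorProduct.lift (retrB R G Lam I σ)
      (ι (trivOne R G) ⊗ₜ[R] toOpM R G I i) = i
    rw [lift.tmul]
    show (show R from σ (ι (trivOne R G))) • toOpM R G I i = i
    rw [hσ1]
    exact one_smul R (toOpM R G I i)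
  intro a b hab
  have h2 := congrArg (retr R G Lam I σ) hab
  rwa [h, h] at h2

end AuxIota

section AuxBeta

open MulOpposite TensorProduct

variable (R : Type u) [CommRing R] (G : Type u) [Group G]

local notation "𝕊" => MonoidAlgebra R G

variable (Lam : Type u) [AddCommGroup Lam] [Module R Lam] [Module (MonoidAlgebra R G) Lam]
  [IsScalarTower R (MonoidAlgebra R G) Lam]
variable (I : Type u) [AddCommGroup I] [Module (MonoidAlgebra R G)ᵐᵒᵖ I]
variable (π : LamTen R G Lam I →ₗ[(MonoidAlgebra R G)ᵐᵒᵖ] I)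
variable (A : Type u) [AddCommGroup A] [Module R A] [Module (MonoidAlgebra R G) A]
  [IsScalarTower R (MonoidAlgebra R G) A]

/-- The underlying function of the map `β`. -/
noncomputable def betaFun (i : I) (x : A) (l : Lam) : NCT 𝕊 I A :=
  Submodule.Quotient.mk
    ((π (show LamTen R G Lam I from l ⊗ₜ[R] toOpM R G I i)) ⊗ₜ[ℤ] x)

theorem betaFun_zero_l (i : I) (x : A) : betaFun R G Lam I π A i x 0 = 0 := by
  unfold betaFun
  rw [show (show LamTen R G Lam I from (0 : Lam) ⊗ₜ[R] toOpM R G I i) = 0 from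
    zero_tmul _ _, map_zero, zero_tmul]
  exact Submodule.Quotient.mk_zero _

theorem betaFun_add_l (i : I) (x : A) (l l' : Lam) :
    betaFun R G Lam I π A i x (l + l') =
      betaFun R G Lam I π A i x l + betaFun R G Lam I π A i x l' := by
  unfold betaFun
  rw [show (show LamTen R G Lam I from (l + l') ⊗ₜ[R] toOpM R G I i) =
      (show LamTen R G Lam I from l ⊗ₜ[R] toOpM R G I i) +
        (show LamTen R G Lam I from l' ⊗ₜ[R] toOpM R G I i) from add_tmul _ _ _,
    map_add, add_tmul]
  exact Submodule.Quotient.mk_add _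

theorem betaFun_zero_x (i : I) (l : Lam) : betaFun R G Lam I π A i 0 l = 0 := by
  unfold betaFun
  rw [tmul_zero]
  exact Submodule.Quotient.mk_zero _

theorem betaFun_add_x (i : I) (x x' : A) (l : Lam) :
    betaFun R G Lam I π A i (x + x') l =
      betaFun R G Lam I π A i x l + betaFun R G Lam I π A i x' l := by
  unfold betaFun
  rw [tmul_add]
  exact Submodule.Quotient.mk_add _

theorem betaFun_add_i (i i' : I) (x : A) (l : Lam) :
    betaFun R G Lam I π A (i + i') x l =
      betaFun R G Lam I π A i x l + betaFun R G Lam I π A i' x l := by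
  unfold betaFun
  rw [show (show LamTen R G Lam I from l ⊗ₜ[R] toOpM R G I (i + i')) =
      (show LamTen R G Lam I from l ⊗ₜ[R] toOpM R G I i) +
        (show LamTen R G Lam I from l ⊗ₜ[R] toOpM R G I i') from
      tmul_add l (toOpM R G I i) (toOpM R G I i'),
    map_add, add_tmul]
  exact Submodule.Quotient.mk_add _

theorem betaFun_balanced (i : I) (r : R) (x : A) (l : Lam) :
    betaFun R G Lam I π A i (r • x) l = betaFun R G Lam I π A i x (r • l) := by
  unfold betaFun
  rw [← algebraMap_smul 𝕊 r x, ← nct_mk_rel, ← map_smul, lamTen_alg_smul,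
    show (r • (show LamTen R G Lam I from l ⊗ₜ[R] toOpM R G I i)) =
      (show LamTen R G Lam I from (r • l) ⊗ₜ[R] toOpM R G I i) from smul_tmul' r _ _]

/-- `β` on `Λ ⊗ A` for fixed `i`. -/
noncomputable def innerβ (i : I) : DiagT R Lam A →+ NCT 𝕊 I A :=
  TensorProduct.liftAddHom
    { toFun := fun x =>
        { toFun := betaFun R G Lam I π A i x
          map_zero' := betaFun_zero_l R G Lam I π A i x
          map_add' := betaFun_add_l R G Lam I π A i x }
      map_zero' := by
        ext l
        exact betaFun_zero_x R G Lam I π A i l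
      map_add' := fun x x' => by
        ext l
        exact betaFun_add_x R G Lam I π A i x x' l }
    (fun r x l => betaFun_balanced R G Lam I π A i r x l)

theorem innerβ_tmul (i : I) (x : A) (l : Lam) :
    innerβ R G Lam I π A i (show DiagT R Lam A from x ⊗ₜ[R] l) =
      betaFun R G Lam I π A i x l :=
  TensorProduct.liftAddHom_tmul _ _ _ _

theorem innerβ_add_i (i i' : I) (y : DiagT R Lam A) :
    innerβ R G Lam I π A (i + i') y =
      innerβ R G Lam I π A i y + innerβ R G Lam I π A i' y := by
  refine diagT_ind R Lam A y ?_ ?_ ?_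
  · simp only [map_zero, add_zero]
  · intro x l
    rw [innerβ_tmul, innerβ_tmul, innerβ_tmul]
    exact betaFun_add_i R G Lam I π A i i' x l
  · intro y z hy hz
    rw [map_add, map_add, map_add, hy, hz]
    abel

theorem innerβ_zero_i (y : DiagT R Lam A) : innerβ R G Lam I π A 0 y = 0 := by
  have h := innerβ_add_i R G Lam I π A 0 0 y
  rw [add_zero] at h
  exact left_eq_add.mp h

theorem innerβ_alg (r : R) (i : I) (y : DiagT R Lam A) :
    innerβ R G Lam I π A (op (algebraMap R 𝕊 r) • i) y =
      innerβ R G Lam I π A i (algebraMap R 𝕊 r • y) := by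
  refine diagT_ind R Lam A y ?_ ?_ ?_
  · rw [map_zero, smul_zero, map_zero]
  · intro x l
    rw [diagT_alg_smul,
      show (r • (show DiagT R Lam A from x ⊗ₜ[R] l)) =
        (show DiagT R Lam A from x ⊗ₜ[R] (r • l)) from (tmul_smul r x l).symm,
      innerβ_tmul, innerβ_tmul]
    unfold betaFun
    rw [show toOpM R G I (op (algebraMap R 𝕊 r) • i) = r • toOpM R G I i from rfl,
      tmul_smul, smul_tmul']
  · intro y z hy hz
    rw [map_add, smul_add, map_add, hy, hz]

theorem innerβ_smul (a : 𝕊) (i : I) (y : DiagT R Lam A) :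
    innerβ R G Lam I π A (op a • i) y = innerβ R G Lam I π A i (a • y) := by
  induction a using MonoidAlgebra.induction_on generalizing i y with
  | of g =>
    refine diagT_ind R Lam A y ?_ ?_ ?_
    · rw [map_zero, smul_zero, map_zero]
    · intro x l
      rw [diagT_of_smul_tmul, innerβ_tmul, innerβ_tmul]
      unfold betaFun
      rw [← nct_mk_rel, ← map_smul, lamTen_of_smul_tmul, smul_smul, ← map_mul,
        inv_mul_cancel, map_one, one_smul]
      rfl
    · intro y z hy hz
      rw [map_add, smul_add, map_add, hy, hz]
  | add a b ha hb =>
    rw [op_add, add_smul, innerβ_add_i, ha, hb, add_smul, map_add]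
  | smul r a ha =>
    rw [Algebra.smul_def, op_mul, mul_smul, ha, innerβ_alg, ← mul_smul]

end AuxBeta

section AuxBeta2

open MulOpposite TensorProduct

variable (R : Type u) [CommRing R] (G : Type u) [Group G]

local notation "𝕊" => MonoidAlgebra R G

variable (Lam : Type u) [AddCommGroup Lam] [Module R Lam] [Module (MonoidAlgebra R G) Lam]
  [IsScalarTower R (MonoidAlgebra R G) Lam]
variable (I : Type u) [AddCommGroup I] [Module (MonoidAlgebra R G)ᵐᵒᵖ I]
variable (π : LamTen R G Lam I →ₗ[(MonoidAlgebra R G)ᵐᵒᵖ] I)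
variable (A : Type u) [AddCommGroup A] [Module R A] [Module (MonoidAlgebra R G) A]
  [IsScalarTower R (MonoidAlgebra R G) A]

/-- The map `I ⊗_ℤ (A ⊗ Λ) → I ⊗_{RG} A`. -/
noncomputable def betaRaw : TensorProduct ℤ I (DiagT R Lam A) →ₗ[ℤ] NCT 𝕊 I A :=
  TensorProduct.lift
    (({ toFun := fun i => (innerβ R G Lam I π A i).toIntLinearMap
        map_zero' := by
          ext y
          exact innerβ_zero_i R G Lam I π A y
        map_add' := fun i j => by
          ext y
          exact innerβ_add_i R G Lam I π A i j y } :
      I →+ (DiagT R Lam A →ₗ[ℤ] NCT 𝕊 I A)).toIntLinearMap)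

theorem betaRaw_tmul (i : I) (y : DiagT R Lam A) :
    betaRaw R G Lam I π A (i ⊗ₜ[ℤ] y) = innerβ R G Lam I π A i y := rfl

/-- The map `β : I ⊗_{RG} (A ⊗ Λ) → I ⊗_{RG} A`. -/
noncomputable def betaMap : NCT 𝕊 I (DiagT R Lam A) →ₗ[ℤ] NCT 𝕊 I A :=
  Submodule.liftQ _ (betaRaw R G Lam I π A)
    (by
      refine Submodule.span_le.2 ?_
      rintro z ⟨i, a, y, rfl⟩
      simp only [SetLike.mem_coe, LinearMap.mem_ker, map_sub, sub_eq_zero]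
      rw [betaRaw_tmul, betaRaw_tmul]
      exact innerβ_smul R G Lam I π A a i y)

theorem betaMap_mk (i : I) (y : DiagT R Lam A) :
    betaMap R G Lam I π A (Submodule.Quotient.mk (i ⊗ₜ[ℤ] y)) =
      innerβ R G Lam I π A i y := by
  rw [betaMap]
  exact (Submodule.liftQ_apply _ _ _).trans (betaRaw_tmul R G Lam I π A i y)

theorem betaMap_mk_tmul (i : I) (x : A) (l : Lam) :
    betaMap R G Lam I π A
        (Submodule.Quotient.mk (i ⊗ₜ[ℤ] (show DiagT R Lam A from x ⊗ₜ[R] l))) =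
      Submodule.Quotient.mk
        ((π (show LamTen R G Lam I from l ⊗ₜ[R] toOpM R G I i)) ⊗ₜ[ℤ] x) := by
  rw [betaMap_mk, innerβ_tmul]
  rfl

end AuxBeta2

section AuxChain

open MulOpposite TensorProduct

variable (R : Type u) [CommRing R] (G : Type u) [Group G]

local notation "𝕊" => MonoidAlgebra R G

variable (Lam : Type u) [AddCommGroup Lam] [Module R Lam] [Module (MonoidAlgebra R G) Lam]
  [IsScalarTower R (MonoidAlgebra R G) Lam]
variable (X : ℤ → Type u) [∀ n, AddCommGroup (X n)] [∀ n, Module R (X n)]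
  [∀ n, Module (MonoidAlgebra R G) (X n)]
  [∀ n, IsScalarTower R (MonoidAlgebra R G) (X n)]

/-- The contracting homotopy as an `R[G]`-linear map of diagonal modules. -/
noncomputable def sSmap
    (s : ∀ n : ℤ, TensorProduct R (X n) Lam →ₗ[R] TensorProduct R (X (n + 1)) Lam)
    (hequiv : ∀ (n : ℤ) (g : G) (x : TensorProduct R (X n) Lam),
      s n (TensorProduct.map (gAct R G (X n) g) (gAct R G Lam g) x) =
        TensorProduct.map (gAct R G (X (n + 1)) g) (gAct R G Lam g) (s n x))
    (m : ℤ) : DiagT R Lam (X m) →ₗ[𝕊] DiagT R Lam (X (m + 1)) :=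
  extendG R G (show DiagT R Lam (X m) →ₗ[R] DiagT R Lam (X (m + 1)) from s m)
    (by
      intro g y
      rw [diagT_of_smul, diagT_of_smul]
      exact hequiv m g y)

/-- The differential of the diagonal complex, `R[G]`-linearly. -/
noncomputable def dYmap (d : ∀ n : ℤ, X (n + 1) →ₗ[MonoidAlgebra R G] X n) (m : ℤ) :
    DiagT R Lam (X (m + 1)) →ₗ[𝕊] DiagT R Lam (X m) :=
  extendG R G
    (show DiagT R Lam (X (m + 1)) →ₗ[R] DiagT R Lam (X m) from
      TensorProduct.map ((d m).restrictScalars R) LinearMap.id)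
    (by
      intro g y
      rw [diagT_of_smul, diagT_of_smul]
      have h1 : ((d m).restrictScalars R) ∘ₗ gAct R G (X (m + 1)) g =
          gAct R G (X m) g ∘ₗ ((d m).restrictScalars R) := by
        ext a
        show d m (MonoidAlgebra.of R G g • a) = MonoidAlgebra.of R G g • d m a
        rw [map_smul]
      calc TensorProduct.map ((d m).restrictScalars R) LinearMap.id
            (TensorProduct.map (gAct R G (X (m + 1)) g) (gAct R G Lam g) y)
          = TensorProduct.map (((d m).restrictScalars R) ∘ₗ gAct R G (X (m + 1)) g)
              ((LinearMap.id : Lam →ₗ[R] Lam) ∘ₗ gAct R G Lam g) y := by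
            rw [TensorProduct.map_comp]
            rfl
        _ = TensorProduct.map (gAct R G (X m) g ∘ₗ ((d m).restrictScalars R))
              (gAct R G Lam g ∘ₗ (LinearMap.id : Lam →ₗ[R] Lam)) y := by
            rw [h1, LinearMap.id_comp, LinearMap.comp_id]
        _ = _ := by
            rw [TensorProduct.map_comp]
            rfl)

theorem dYmap_apply (d : ∀ n : ℤ, X (n + 1) →ₗ[MonoidAlgebra R G] X n) (m : ℤ)
    (y : DiagT R Lam (X (m + 1))) :
    dYmap R G Lam X d m y = LinearMap.rTensor Lam ((d m).restrictScalars R) y := rfl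

theorem dYmap_tmul (d : ∀ n : ℤ, X (n + 1) →ₗ[MonoidAlgebra R G] X n) (m : ℤ)
    (x : X (m + 1)) (l : Lam) :
    dYmap R G Lam X d m (show DiagT R Lam (X (m + 1)) from x ⊗ₜ[R] l) =
      (show DiagT R Lam (X m) from (d m x) ⊗ₜ[R] l) := by
  show TensorProduct.map ((d m).restrictScalars R) LinearMap.id (x ⊗ₜ[R] l) = _
  rw [TensorProduct.map_tmul]
  rfl

/-- Induction principle for elements of `NCT`. -/
theorem nct_ind {S : Type u} [Ring S] {I : Type u} [AddCommGroup I] [Module Sᵐᵒᵖ I]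
    {M : Type u} [AddCommGroup M] [Module S M] {P : NCT S I M → Prop} (h0 : P 0)
    (htmul : ∀ (a : I) (m : M), P (Submodule.Quotient.mk (a ⊗ₜ[ℤ] m)))
    (hadd : ∀ x y, P x → P y → P (x + y)) : ∀ t, P t := by
  intro t
  obtain ⟨u, rfl⟩ := Submodule.Quotient.mk_surjective _ t
  refine TensorProduct.induction_on u ?_ htmul ?_
  · rw [Submodule.Quotient.mk_zero]
    exact h0
  · intro x y hx hy
    rw [Submodule.Quotient.mk_add]
    exact hadd _ _ hx hy

end AuxChain


set_option maxHeartbeats 2000000 in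
/-- Let `Λ` be an `R[G]`-module admitting an `R`-split `R[G]`-linear
monomorphism `ι : R → Λ`, and let `X` (with differentials `d`) be a complex of `R[G]`-modules
such that the complex of diagonal `R[G]`-modules `X ⊗_R Λ` is contractible (the contracting
homotopy `s` is `R`-linear and `G`-equivariant for the diagonal action). Then `I ⊗_RG X` is
acyclic for every injective `R[G]`-module `I`. -/
theorem tensor_injective_acyclic_of_contractible (R : Type u) [CommRing R]
    (G : Type u) [Group G]
    (Lam : Type u) [AddCommGroup Lam] [Module R Lam] [Module (MonoidAlgebra R G) Lam]
    [IsScalarTower R (MonoidAlgebra R G) Lam]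
    (ι : Triv R G →ₗ[MonoidAlgebra R G] Lam) (hinj : Function.Injective ι)
    (σ : Lam →ₗ[R] Triv R G) (hσ : ∀ x, σ (ι x) = x)
    (X : ℤ → Type u) [∀ n, AddCommGroup (X n)] [∀ n, Module R (X n)]
    [∀ n, Module (MonoidAlgebra R G) (X n)]
    [∀ n, IsScalarTower R (MonoidAlgebra R G) (X n)]
    (d : ∀ n : ℤ, X (n + 1) →ₗ[MonoidAlgebra R G] X n)
    (hd : ∀ (n : ℤ) (x : X (n + 1 + 1)), d n (d (n + 1) x) = 0)
    (s : ∀ n : ℤ, TensorProduct R (X n) Lam →ₗ[R] TensorProduct R (X (n + 1)) Lam)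
    (hequiv : ∀ (n : ℤ) (g : G) (x : TensorProduct R (X n) Lam),
      s n (TensorProduct.map (gAct R G (X n) g) (gAct R G Lam g) x) =
        TensorProduct.map (gAct R G (X (n + 1)) g) (gAct R G Lam g) (s n x))
    (hhomot : ∀ (n : ℤ) (x : TensorProduct R (X (n + 1)) Lam),
      LinearMap.rTensor Lam ((d (n + 1)).restrictScalars R) (s (n + 1) x) +
        s n (LinearMap.rTensor Lam ((d n).restrictScalars R) x) = x) :
    ∀ (I : Type u) [AddCommGroup I] [Module (MonoidAlgebra R G)ᵐᵒᵖ I],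
      Module.Injective (MonoidAlgebra R G)ᵐᵒᵖ I →
      ∀ n : ℤ, Function.Exact (nctMap (MonoidAlgebra R G) I (d (n + 1)))
        (nctMap (MonoidAlgebra R G) I (d n)) := by
  intro I _ _ hI n
  have hσ1 : σ (ι (trivOne R G)) = trivOne R G := hσ _
  obtain ⟨π, hπ⟩ := hI.out (iotaI R G Lam ι I)
    (iotaI_injective R G Lam ι I σ hσ1) LinearMap.id
  -- K1 : β ∘ α = id
  have K1 : ∀ (m : ℤ) (t : NCT (MonoidAlgebra R G) I (X m)),
      betaMap R G Lam I π (X m)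
        (nctMap (MonoidAlgebra R G) I (iotaX R G Lam ι (X m)) t) = t := by
    intro m
    refine nct_ind ?_ ?_ ?_
    · rw [map_zero, map_zero]
    · intro a x
      rw [nctMap_mk, iotaX_apply, betaMap_mk_tmul, ← iotaI_apply, hπ a]
      rfl
    · intro t u ht hu
      rw [map_add, map_add, ht, hu]
  -- K2 : β is a chain map
  have K2 : ∀ (m : ℤ) (t : NCT (MonoidAlgebra R G) I (DiagT R Lam (X (m + 1)))),
      nctMap (MonoidAlgebra R G) I (d m) (betaMap R G Lam I π (X (m + 1)) t) =
        betaMap R G Lam I π (X m)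
          (nctMap (MonoidAlgebra R G) I (dYmap R G Lam X d m) t) := by
    intro m
    refine nct_ind ?_ ?_ ?_
    · rw [map_zero, map_zero, map_zero, map_zero]
    · intro a y
      refine diagT_ind R Lam (X (m + 1)) y ?_ ?_ ?_
      · rw [show (a ⊗ₜ[ℤ] (0 : DiagT R Lam (X (m + 1)))) = 0 from TensorProduct.tmul_zero _ a]
        rw [nct_mk_zero, map_zero, map_zero, map_zero, map_zero]
      · intro x l
        rw [betaMap_mk_tmul, nctMap_mk, nctMap_mk, dYmap_tmul, betaMap_mk_tmul]
      · intro y z hy hz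
        rw [show (a ⊗ₜ[ℤ] (y + z) : TensorProduct ℤ I (DiagT R Lam (X (m + 1)))) =
            a ⊗ₜ[ℤ] y + a ⊗ₜ[ℤ] z from TensorProduct.tmul_add a y z]
        rw [nct_mk_add]
        exact (congrArg (nctMap (MonoidAlgebra R G) I (d m))
          (map_add (betaMap R G Lam I π (X (m + 1))) _ _)).trans
          ((map_add _ _ _).trans ((congrArg₂ (· + ·) hy hz).trans
            ((map_add (betaMap R G Lam I π (X m)) _ _).symm.trans
              (congrArg (betaMap R G Lam I π (X m))
                (map_add (nctMap (MonoidAlgebra R G) I (dYmap R G Lam X d m)) _ _).symm))))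
    · intro t u ht hu
      rw [map_add, map_add, map_add, map_add, ht, hu]
  -- K3 : α is a chain map
  have K3 : ∀ (m : ℤ) (t : NCT (MonoidAlgebra R G) I (X (m + 1))),
      nctMap (MonoidAlgebra R G) I (iotaX R G Lam ι (X m))
          (nctMap (MonoidAlgebra R G) I (d m) t) =
        nctMap (MonoidAlgebra R G) I (dYmap R G Lam X d m)
          (nctMap (MonoidAlgebra R G) I (iotaX R G Lam ι (X (m + 1))) t) := by
    intro m
    refine nct_ind ?_ ?_ ?_
    · rw [map_zero, map_zero, map_zero, map_zero]
    · intro a x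
      rw [nctMap_mk, nctMap_mk, nctMap_mk, nctMap_mk, iotaX_apply, iotaX_apply, dYmap_tmul]
    · intro t u ht hu
      rw [map_add, map_add, map_add, map_add, ht, hu]
  -- K4 : contracting homotopy on the diagonal complex
  have K4 : ∀ (m : ℤ) (t : NCT (MonoidAlgebra R G) I (DiagT R Lam (X (m + 1)))),
      nctMap (MonoidAlgebra R G) I (dYmap R G Lam X d (m + 1))
          (nctMap (MonoidAlgebra R G) I (sSmap R G Lam X s hequiv (m + 1)) t) +
        nctMap (MonoidAlgebra R G) I (sSmap R G Lam X s hequiv m)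
          (nctMap (MonoidAlgebra R G) I (dYmap R G Lam X d m) t) = t := by
    intro m
    refine nct_ind ?_ ?_ ?_
    · rw [map_zero, map_zero, map_zero, map_zero, add_zero]
    · intro a y
      rw [nctMap_mk, nctMap_mk, nctMap_mk, nctMap_mk]
      erw [← Submodule.Quotient.mk_add]
      rw [← TensorProduct.tmul_add, dYmap_apply, dYmap_apply,
        show sSmap R G Lam X s hequiv (m + 1) y = s (m + 1) y from rfl,
        show ∀ z : TensorProduct R (X m) Lam, sSmap R G Lam X s hequiv m z = s m z
          from fun z => rfl]
      erw [hhomot m y]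
    · intro t u ht hu
      rw [map_add, map_add, map_add, map_add]
      calc _ = (nctMap (MonoidAlgebra R G) I (dYmap R G Lam X d (m + 1))
            (nctMap (MonoidAlgebra R G) I (sSmap R G Lam X s hequiv (m + 1)) t) +
          nctMap (MonoidAlgebra R G) I (sSmap R G Lam X s hequiv m)
            (nctMap (MonoidAlgebra R G) I (dYmap R G Lam X d m) t)) +
          (nctMap (MonoidAlgebra R G) I (dYmap R G Lam X d (m + 1))
            (nctMap (MonoidAlgebra R G) I (sSmap R G Lam X s hequiv (m + 1)) u) +
          nctMap (MonoidAlgebra R G) I (sSmap R G Lam X s hequiv m)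
            (nctMap (MonoidAlgebra R G) I (dYmap R G Lam X d m) u)) := by abel
        _ = t + u := by rw [ht, hu]
  -- K5 : d ∘ d = 0 after tensoring
  have K5 : ∀ (m : ℤ) (t : NCT (MonoidAlgebra R G) I (X (m + 1 + 1))),
      nctMap (MonoidAlgebra R G) I (d m) (nctMap (MonoidAlgebra R G) I (d (m + 1)) t) = 0 := by
    intro m
    refine nct_ind ?_ ?_ ?_
    · rw [map_zero, map_zero]
    · intro a x
      rw [nctMap_mk, nctMap_mk, hd m x, TensorProduct.tmul_zero, Submodule.Quotient.mk_zero]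
      rfl
    · intro t u ht hu
      rw [map_add, map_add, ht, hu, add_zero]
  intro y
  constructor
  · intro hy
    refine ⟨betaMap R G Lam I π (X (n + 1 + 1))
      (nctMap (MonoidAlgebra R G) I (sSmap R G Lam X s hequiv (n + 1))
        (nctMap (MonoidAlgebra R G) I (iotaX R G Lam ι (X (n + 1))) y)), ?_⟩
    have hdtn : nctMap (MonoidAlgebra R G) I (dYmap R G Lam X d n)
        (nctMap (MonoidAlgebra R G) I (iotaX R G Lam ι (X (n + 1))) y) = 0 := by
      rw [← K3 n y, hy, map_zero]
    have h4 := K4 n (nctMap (MonoidAlgebra R G) I (iotaX R G Lam ι (X (n + 1))) y)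
    rw [hdtn, map_zero, add_zero] at h4
    rw [K2 (n + 1), h4, K1 (n + 1) y]
  · rintro ⟨x, rfl⟩
    exact K5 n x
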